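/- Let A and C be n×n Hermitian complex matrices, and suppose all n eigenvalues of A are simple (pairwise distinct). For each k ≤ n, let P_k(A) denote the orthogonal projection onto the subspace spanned by the eigenvectors of A corresponding to its k largest eigenvalues. Then the function t ↦ Σ_{j=1}^k λ_j↓(A + tC) is differentiable at t = 0 with derivative equal to Tr[P_k(A) C]. Equivalently, if U is the unitary with U A U* = diag(λ_1↓(A), ..., λ_n↓(A)), the derivative equals Σ_{j=1}^k (U C U*)_{jj}. -/

import Mathlib

/-!
Let `f t` be the sum of the `k` largest eigenvalues of `A + t C`, `P₀ = U* D_k U` and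
`d = Re Tr(P₀ C)`. By Ky Fan's principle, `Re Tr(M Q)` is at most the sum of the `k` largest
eigenvalues of `M` for every orthogonal projection `Q` of rank `k`; with `M = A + t C` and
`Q = P₀` this gives `f 0 + t d ≤ f t`. Conversely, let `P` be the spectral projection of
`A + t C` onto its top `k` eigenvectors. Since `λ_k(A) - λ_{k+1}(A) = g > 0`, Ky Fan's
inequality for `A` sharpens to `Re Tr(A P) ≤ f 0 - (g/2) ‖P - P₀‖²` (Frobenius norm), and the
cross term `t Re Tr((P - P₀) C)` is at most `(g/2) ‖P - P₀‖² + t² ‖C‖² / (2g)`. Hence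
`0 ≤ f t - f 0 - t d ≤ t² ‖C‖² / (2g)`.
-/

open Matrix
open scoped ComplexOrder

/-- The eigenvalues of a square matrix, sorted in non-increasing order
(junk value `0` if the matrix is not Hermitian). -/
noncomputable def eigValsDown {𝕜 : Type*} [RCLike 𝕜] {n : ℕ}
    (A : Matrix (Fin n) (Fin n) 𝕜) : Fin n → ℝ :=
  if hA : A.IsHermitian then
    fun k => (hA.eigenvalues ∘ Tuple.sort hA.eigenvalues) k.rev
  else 0

/-- Functional calculus: apply a real function to a Hermitian matrix via its spectral
decomposition (junk value `0` if the matrix is not Hermitian). -/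
noncomputable def matFun {𝕜 : Type*} [RCLike 𝕜] {n : ℕ} (h : ℝ → ℝ)
    (A : Matrix (Fin n) (Fin n) 𝕜) : Matrix (Fin n) (Fin n) 𝕜 :=
  if hA : A.IsHermitian then
    (hA.eigenvectorUnitary : Matrix (Fin n) (Fin n) 𝕜) *
      Matrix.diagonal (fun i => (h (hA.eigenvalues i) : 𝕜)) *
      star (hA.eigenvectorUnitary : Matrix (Fin n) (Fin n) 𝕜)
  else 0

/-- The operator norm (largest singular value) of a matrix. -/
noncomputable def opNorm {𝕜 : Type*} [RCLike 𝕜] {n : ℕ}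
    (A : Matrix (Fin n) (Fin n) 𝕜) : ℝ :=
  ‖Matrix.toEuclideanCLM (𝕜 := 𝕜) A‖

/-- The matrix absolute value `|M| = (Mᴴ M)^(1/2)`. -/
noncomputable def matAbs {𝕜 : Type*} [RCLike 𝕜] {n : ℕ}
    (A : Matrix (Fin n) (Fin n) 𝕜) : Matrix (Fin n) (Fin n) 𝕜 :=
  ((Matrix.posSemidef_conjTranspose_mul_self A).1.eigenvectorUnitary : Matrix (Fin n) (Fin n) 𝕜) *
    Matrix.diagonal (fun i =>
      ((Real.sqrt ((Matrix.posSemidef_conjTranspose_mul_self A).1.eigenvalues i) : ℝ) : 𝕜)) *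
    (star (Matrix.posSemidef_conjTranspose_mul_self A).1.eigenvectorUnitary : Matrix (Fin n) (Fin n) 𝕜)

/-- The Ky Fan `k`-norm: the sum of the `k` largest singular values. -/
noncomputable def kyFanNorm {𝕜 : Type*} [RCLike 𝕜] {n : ℕ} (k : ℕ)
    (A : Matrix (Fin n) (Fin n) 𝕜) : ℝ :=
  ∑ j ∈ Finset.univ.filter (fun j : Fin n => (j : ℕ) < k), eigValsDown (matAbs A) j

open Finset

section Weights

variable {ι : Type*} [Fintype ι] (p : ι → Prop) [DecidablePred p]

theorem sum_mul_le_sum_filter_sub_mul {Λ q : ι → ℝ} {c g : ℝ}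
    (hq0 : ∀ i, 0 ≤ q i) (hq1 : ∀ i, q i ≤ 1) (hq : ∑ i, q i = #(univ.filter p))
    (hup : ∀ i, p i → c + g ≤ Λ i) (hdn : ∀ i, ¬ p i → Λ i ≤ c) :
    ∑ i, Λ i * q i ≤
      ∑ i ∈ univ.filter p, Λ i - g * (#(univ.filter p) - ∑ i ∈ univ.filter p, q i) := by
  have hsplit := sum_filter_add_sum_filter_not univ p q
  calc ∑ i, Λ i * q i
      = ∑ i ∈ univ.filter p, Λ i * q i + ∑ i ∈ univ.filter (¬ p ·), Λ i * q i :=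
        (sum_filter_add_sum_filter_not _ _ _).symm
    _ ≤ ∑ i ∈ univ.filter p, (Λ i + (c + g) * (q i - 1)) +
          ∑ i ∈ univ.filter (¬ p ·), c * q i := by
        refine add_le_add (sum_le_sum fun i hi => ?_) (sum_le_sum fun i hi => ?_)
        · nlinarith [hq1 i, hup i (mem_filter.1 hi).2]
        · exact mul_le_mul_of_nonneg_right (hdn i (mem_filter.1 hi).2) (hq0 i)
    _ = _ := by
        simp only [sum_add_distrib, ← mul_sum, sum_sub_distrib, sum_const, nsmul_one]
        linear_combination c * hsplit + c * hq

end Weights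

theorem Antitone.exists_threshold {n : ℕ} {Λ : Fin n → ℝ} (hΛ : Antitone Λ) (k : ℕ) :
    ∃ c, (∀ i : Fin n, (i : ℕ) < k → c ≤ Λ i) ∧ ∀ i : Fin n, ¬ (i : ℕ) < k → Λ i ≤ c := by
  by_cases hk : k < n
  · exact ⟨Λ ⟨k, hk⟩, fun i hi => hΛ (Fin.le_def.2 hi.le),
      fun i hi => hΛ (Fin.le_def.2 (not_lt.1 hi))⟩
  · refine ⟨-∑ i, |Λ i|, fun i _ => ?_, fun i hi => absurd i.2 (by omega)⟩
    linarith [neg_abs_le (Λ i), single_le_sum (fun j _ => abs_nonneg (Λ j)) (mem_univ i)]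

theorem StrictAnti.exists_gap {n : ℕ} {Λ : Fin n → ℝ} (hΛ : StrictAnti Λ) (k : ℕ) :
    ∃ c g, 0 < g ∧ (∀ i : Fin n, (i : ℕ) < k → c + g ≤ Λ i) ∧
      ∀ i : Fin n, ¬ (i : ℕ) < k → Λ i ≤ c := by
  obtain ⟨c, hup, hdn⟩ := hΛ.antitone.exists_threshold k
  by_cases hk0 : k = 0
  · exact ⟨c, 1, one_pos, fun i hi => absurd hi (by omega), hdn⟩
  by_cases hkn : k < n
  · refine ⟨Λ ⟨k, hkn⟩, Λ ⟨k - 1, by omega⟩ - Λ ⟨k, hkn⟩,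
      sub_pos.2 (hΛ (Fin.lt_def.2 (by simp; omega))), fun i hi => ?_,
      fun i hi => hΛ.antitone (Fin.le_def.2 (not_lt.1 hi))⟩
    simpa using hΛ.antitone (Fin.le_def.2 (by simp; omega) : i ≤ ⟨k - 1, by omega⟩)
  · exact ⟨c - 1, 1, one_pos, fun i hi => by linarith [hup i hi],
      fun i hi => absurd i.2 (by omega)⟩

theorem hasDerivAt_of_abs_sub_le_sq {f : ℝ → ℝ} {d x K : ℝ}
    (h : ∀ t, |f t - f x - (t - x) * d| ≤ K * (t - x) ^ 2) : HasDerivAt f d x := by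
  rw [hasDerivAt_iff_isLittleO]
  refine (Asymptotics.IsBigO.of_bound K (.of_forall fun t => ?_)).trans_isLittleO
    (Asymptotics.isLittleO_pow_sub_sub x one_lt_two)
  simpa [Real.norm_eq_abs, sq_abs] using h t

theorem Matrix.trace_sub_mul_sub_of_isIdempotentElem {ι R : Type*} [Fintype ι] [CommRing R]
    {P Q : Matrix ι ι R} (hP : IsIdempotentElem P) (hQ : IsIdempotentElem Q) :
    ((P - Q) * (P - Q)).trace = P.trace + Q.trace - 2 * (P * Q).trace := by
  rw [sub_mul, mul_sub, mul_sub, hP.eq, hQ.eq, trace_sub, trace_sub, trace_sub, trace_mul_comm Q P]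
  ring

section Projections

variable {ι 𝕜 : Type*} [Fintype ι] [RCLike 𝕜]

theorem Matrix.IsHermitian.two_mul_re_trace_mul_le {X Y : Matrix ι ι 𝕜} (hX : X.IsHermitian)
    (hY : Y.IsHermitian) :
    2 * RCLike.re (X * Y).trace ≤ RCLike.re (X * X).trace + RCLike.re (Y * Y).trace := by
  have h := (RCLike.nonneg_iff.1 (posSemidef_conjTranspose_mul_self (X - Y)).trace_nonneg).1
  rw [conjTranspose_sub, hX.eq, hY.eq, sub_mul, mul_sub, mul_sub, trace_sub, trace_sub, trace_sub,
    trace_mul_comm Y X] at h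
  simp only [map_sub] at h
  linarith

theorem IsStarProjection.re_diag_nonneg {Q : Matrix ι ι 𝕜} (hQ : IsStarProjection Q) (i : ι) :
    0 ≤ RCLike.re (Q i i) := by
  have hQQ : Qᴴ * Q = Q := by
    rw [← star_eq_conjTranspose, hQ.isSelfAdjoint.star_eq, hQ.isIdempotentElem.eq]
  exact (RCLike.nonneg_iff.1 ((hQQ ▸ posSemidef_conjTranspose_mul_self Q).diag_nonneg)).1

variable [DecidableEq ι]

theorem IsStarProjection.re_diag_le_one {Q : Matrix ι ι 𝕜} (hQ : IsStarProjection Q) (i : ι) :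
    RCLike.re (Q i i) ≤ 1 := by
  simpa using hQ.one_sub.re_diag_nonneg i

theorem IsStarProjection.conj_of_mem_unitaryGroup {Q V : Matrix ι ι 𝕜}
    (hQ : IsStarProjection Q) (hV : V ∈ unitaryGroup ι 𝕜) : IsStarProjection (V * Q * star V) :=
  hQ.map (Unitary.conjStarAlgAut 𝕜 _ ⟨V, hV⟩)

theorem trace_conj_of_mem_unitaryGroup {Q V : Matrix ι ι 𝕜} (hV : V ∈ unitaryGroup ι 𝕜) :
    (V * Q * star V).trace = Q.trace := by
  rw [trace_mul_cycle, Unitary.star_mul_self_of_mem hV, one_mul]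

theorem trace_diagonal_mul (d : ι → 𝕜) (Q : Matrix ι ι 𝕜) :
    (diagonal d * Q).trace = ∑ i, d i * Q i i := by
  simp [trace, diagonal_mul]

def coordProj (p : ι → Prop) [DecidablePred p] : Matrix ι ι 𝕜 :=
  diagonal fun i => if p i then 1 else 0

variable (p : ι → Prop) [DecidablePred p]

theorem isStarProjection_coordProj : IsStarProjection (coordProj p : Matrix ι ι 𝕜) where
  isIdempotentElem := by
    rw [IsIdempotentElem, coordProj, diagonal_mul_diagonal]
    congr 1; ext i; by_cases h : p i <;> simp [h]
  isSelfAdjoint := by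
    rw [IsSelfAdjoint, coordProj, star_eq_conjTranspose, diagonal_conjTranspose]
    congr 1; ext i; by_cases h : p i <;> simp [h]

theorem trace_coordProj_mul (Q : Matrix ι ι 𝕜) :
    (coordProj p * Q).trace = ∑ i ∈ univ.filter p, Q i i := by
  rw [coordProj, trace_diagonal_mul, sum_filter]
  exact sum_congr rfl fun i _ => by split_ifs <;> simp

variable {U : Matrix ι ι 𝕜}

theorem isStarProjection_star_mul_coordProj_mul (hU : U ∈ unitaryGroup ι 𝕜) :
    IsStarProjection (star U * coordProj p * U) := by
  simpa using (isStarProjection_coordProj p).conj_of_mem_unitaryGroup (Unitary.star_mem hU)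

theorem trace_star_mul_coordProj_mul (hU : U ∈ unitaryGroup ι 𝕜) :
    (star U * coordProj p * U).trace = (#(univ.filter p) : 𝕜) := by
  have h := trace_conj_of_mem_unitaryGroup (Q := coordProj p) (Unitary.star_mem hU)
  rw [star_star] at h
  simpa [h] using trace_coordProj_mul p (1 : Matrix ι ι 𝕜)

end Projections

section KyFan

variable {ι 𝕜 : Type*} [Fintype ι] [DecidableEq ι] [RCLike 𝕜] (p : ι → Prop) [DecidablePred p]
  {M V Q : Matrix ι ι 𝕜} {Λ : ι → ℝ} {c g : ℝ}

theorem re_trace_diagonal_mul_le_sum_sub (hQ : IsStarProjection Q)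
    (htr : Q.trace = #(univ.filter p))
    (hup : ∀ i, p i → c + g ≤ Λ i) (hdn : ∀ i, ¬ p i → Λ i ≤ c) :
    RCLike.re (diagonal (fun i => (Λ i : 𝕜)) * Q).trace ≤
      ∑ i ∈ univ.filter p, Λ i - g * (#(univ.filter p) - RCLike.re (coordProj p * Q).trace) := by
  have hsum : ∑ i, RCLike.re (Q i i) = #(univ.filter p) := by
    simpa [trace, map_sum] using congrArg RCLike.re htr
  simpa only [trace_diagonal_mul, trace_coordProj_mul, map_sum, RCLike.re_ofReal_mul] using
    sum_mul_le_sum_filter_sub_mul p hQ.re_diag_nonneg hQ.re_diag_le_one hsum hup hdn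

theorem re_trace_mul_le_sum_sub (hV : V ∈ unitaryGroup ι 𝕜)
    (hM : V * M * star V = diagonal (fun i => (Λ i : 𝕜)))
    (hQ : IsStarProjection Q) (htr : Q.trace = #(univ.filter p))
    (hup : ∀ i, p i → c + g ≤ Λ i) (hdn : ∀ i, ¬ p i → Λ i ≤ c) :
    RCLike.re (M * Q).trace ≤ ∑ i ∈ univ.filter p, Λ i -
      g * (#(univ.filter p) - RCLike.re ((star V * coordProj p * V) * Q).trace) := by
  have hMQ : (M * Q).trace = (diagonal (fun i => (Λ i : 𝕜)) * (V * Q * star V)).trace := by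
    rw [← hM, ← trace_conj_of_mem_unitaryGroup hV (Q := M * Q)]
    simp only [mul_assoc]
    rw [← mul_assoc (star V) V, Unitary.star_mul_self_of_mem hV, one_mul]
  have hPQ : ((star V * coordProj p * V) * Q).trace =
      (coordProj p * (V * Q * star V)).trace := by
    rw [show star V * coordProj p * V * Q = star V * (coordProj p * V * Q) by
      simp only [mul_assoc], trace_mul_comm]
    simp only [mul_assoc]
  rw [hMQ, hPQ]
  exact re_trace_diagonal_mul_le_sum_sub p (hQ.conj_of_mem_unitaryGroup hV)
    (by rw [trace_conj_of_mem_unitaryGroup hV, htr]) hup hdn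

theorem re_trace_mul_star_mul_coordProj_mul
    (hM : V * M * star V = diagonal (fun i => (Λ i : 𝕜))) :
    RCLike.re (M * (star V * coordProj p * V)).trace = ∑ i ∈ univ.filter p, Λ i := by
  rw [show M * (star V * coordProj p * V) = M * star V * coordProj p * V by
      simp only [mul_assoc], trace_mul_comm, ← mul_assoc, ← mul_assoc, hM, trace_mul_comm,
    trace_coordProj_mul, map_sum]
  simp

end KyFan

namespace Matrix

theorem submatrix_mem_unitaryGroup {ι 𝕜 : Type*} [Fintype ι] [DecidableEq ι] [RCLike 𝕜]
    {V : Matrix ι ι 𝕜} (hV : V ∈ unitaryGroup ι 𝕜) (σ : Equiv.Perm ι) :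
    V.submatrix σ id ∈ unitaryGroup ι 𝕜 := by
  rw [mem_unitaryGroup_iff, star_eq_conjTranspose, conjTranspose_submatrix,
    ← submatrix_mul _ _ _ _ _ Function.bijective_id, ← star_eq_conjTranspose,
    Unitary.mul_star_self_of_mem hV, submatrix_one_equiv]

namespace IsHermitian

variable {𝕜 : Type*} [RCLike 𝕜] {n : ℕ} {A : Matrix (Fin n) (Fin n) 𝕜}

theorem eigValsDown_eq (hA : A.IsHermitian) :
    eigValsDown A = hA.eigenvalues ∘ Tuple.sort hA.eigenvalues ∘ Fin.rev := by
  rw [eigValsDown, dif_pos hA]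
  rfl

theorem antitone_eigValsDown (hA : A.IsHermitian) : Antitone (eigValsDown A) := by
  rw [hA.eigValsDown_eq]
  exact fun i j hij => Tuple.monotone_sort hA.eigenvalues (Fin.rev_le_rev.2 hij)

theorem strictAnti_eigValsDown (hA : A.IsHermitian) (hs : Function.Injective hA.eigenvalues) :
    StrictAnti (eigValsDown A) := by
  refine hA.antitone_eigValsDown.strictAnti_of_injective ?_
  rw [hA.eigValsDown_eq]
  exact hs.comp ((Tuple.sort hA.eigenvalues).injective.comp Fin.rev_injective)

theorem exists_unitary_conj_eq_diagonal_eigValsDown (hA : A.IsHermitian) :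
    ∃ V ∈ unitaryGroup (Fin n) 𝕜,
      V * A * star V = diagonal (fun j => (eigValsDown A j : 𝕜)) := by
  set W : Matrix (Fin n) (Fin n) 𝕜 := ↑hA.eigenvectorUnitary
  set σ : Equiv.Perm (Fin n) := Fin.revPerm.trans (Tuple.sort hA.eigenvalues)
  have hW : star W * A * W = diagonal (RCLike.ofReal ∘ hA.eigenvalues) := by
    rw [← hA.conjStarAlgAut_star_eigenvectorUnitary, Unitary.conjStarAlgAut_star_apply]
  have hconj : (star W).submatrix σ id * A * W.submatrix id σ =
      (star W * A * W).submatrix σ σ := by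
    rw [submatrix_mul _ _ _ _ _ Function.bijective_id,
      submatrix_mul _ _ _ _ _ Function.bijective_id, submatrix_id_id]
  refine ⟨(star W).submatrix σ id,
    submatrix_mem_unitaryGroup (Unitary.star_mem hA.eigenvectorUnitary.2) σ, ?_⟩
  rw [star_eq_conjTranspose ((star W).submatrix σ id), conjTranspose_submatrix,
    ← star_eq_conjTranspose, star_star, hconj, hW, submatrix_diagonal_equiv, hA.eigValsDown_eq]
  rfl

end IsHermitian

end Matrix

section Perturbation

variable {ι 𝕜 : Type*} [Fintype ι] [DecidableEq ι] [RCLike 𝕜] (p : ι → Prop) [DecidablePred p]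
  {A C U V : Matrix ι ι 𝕜} {Λ μ : ι → ℝ} {t : ℝ}

theorem sum_add_mul_re_trace_le_sum {c : ℝ} (hU : U ∈ unitaryGroup ι 𝕜)
    (hUA : U * A * star U = diagonal (fun i => (Λ i : 𝕜))) (hV : V ∈ unitaryGroup ι 𝕜)
    (hVA : V * (A + t • C) * star V = diagonal (fun i => (μ i : 𝕜)))
    (hup : ∀ i, p i → c ≤ μ i) (hdn : ∀ i, ¬ p i → μ i ≤ c) :
    ∑ i ∈ univ.filter p, Λ i + t * RCLike.re ((star U * coordProj p * U) * C).trace ≤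
      ∑ i ∈ univ.filter p, μ i := by
  have h := re_trace_mul_le_sum_sub p (g := 0) hV hVA
    (isStarProjection_star_mul_coordProj_mul p hU) (trace_star_mul_coordProj_mul p hU)
    (by simpa using hup) hdn
  rwa [zero_mul, sub_zero, add_mul, trace_add, map_add, re_trace_mul_star_mul_coordProj_mul p hUA,
    smul_mul, trace_smul, RCLike.smul_re, trace_mul_comm] at h

theorem sum_le_sum_add_mul_re_trace_add {c g : ℝ} (hC : C.IsHermitian)
    (hU : U ∈ unitaryGroup ι 𝕜) (hUA : U * A * star U = diagonal (fun i => (Λ i : 𝕜)))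
    (hV : V ∈ unitaryGroup ι 𝕜)
    (hVA : V * (A + t • C) * star V = diagonal (fun i => (μ i : 𝕜)))
    (hg : 0 < g) (hup : ∀ i, p i → c + g ≤ Λ i) (hdn : ∀ i, ¬ p i → Λ i ≤ c) :
    ∑ i ∈ univ.filter p, μ i ≤ ∑ i ∈ univ.filter p, Λ i +
      t * RCLike.re ((star U * coordProj p * U) * C).trace +
      RCLike.re (C * C).trace / (2 * g) * t ^ 2 := by
  have hP₀ := isStarProjection_star_mul_coordProj_mul p hU
  have hP := isStarProjection_star_mul_coordProj_mul p hV
  have htrP₀ := trace_star_mul_coordProj_mul p hU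
  have htrP := trace_star_mul_coordProj_mul p hV
  set m : ℕ := #(univ.filter p)
  set P₀ := star U * coordProj p * U
  set P := star V * coordProj p * V
  have hsum : ∑ i ∈ univ.filter p, μ i =
      RCLike.re (A * P).trace + t * RCLike.re (C * P).trace := by
    rw [← re_trace_mul_star_mul_coordProj_mul p hVA, add_mul, trace_add, map_add, smul_mul,
      trace_smul, RCLike.smul_re]
  have hKyFan : RCLike.re (A * P).trace ≤
      ∑ i ∈ univ.filter p, Λ i - g * (m - RCLike.re (P₀ * P).trace) :=
    re_trace_mul_le_sum_sub p hU hUA hP htrP hup hdn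
  have hdist : RCLike.re ((P - P₀) * (P - P₀)).trace = 2 * (m - RCLike.re (P₀ * P).trace) := by
    rw [trace_sub_mul_sub_of_isIdempotentElem hP.isIdempotentElem hP₀.isIdempotentElem,
      htrP₀, htrP, trace_mul_comm P]
    simp
    ring
  have hCP : RCLike.re (C * P).trace =
      RCLike.re (P₀ * C).trace + RCLike.re ((P - P₀) * C).trace := by
    rw [trace_mul_comm C, sub_mul, trace_sub, map_sub]
    ring
  have hAMGM := ((hP.isSelfAdjoint.sub hP₀.isSelfAdjoint).isHermitian.smul
    (IsSelfAdjoint.all g)).two_mul_re_trace_mul_le (hC.smul (IsSelfAdjoint.all t))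
  simp only [smul_mul, Matrix.mul_smul, trace_smul, RCLike.smul_re, hdist] at hAMGM
  have hcross : t * RCLike.re ((P - P₀) * C).trace - g * (m - RCLike.re (P₀ * P).trace) ≤
      RCLike.re (C * C).trace / (2 * g) * t ^ 2 := by
    rw [div_mul_eq_mul_div, le_div_iff₀ (by positivity)]
    linarith
  rw [hCP] at hsum
  linarith

end Perturbation

/-- Proposition `prop:delta`, simple-eigenvalue case: if all eigenvalues of
the Hermitian matrix `A` are simple, `U` is the unitary with `U A U* = diag(λ↓(A))`, so that
`P_k(A) = U* D_k U` with `D_k` the diagonal `0/1`-indicator of the first `k` entries, then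
`t ↦ Σ_{j=1}^k λ_j↓(A + tC)` is differentiable at `t = 0` with derivative `Tr[P_k(A) C]`. -/
theorem stmt7 {n : ℕ} (A C : Matrix (Fin n) (Fin n) ℂ)
    (hA : A.IsHermitian) (hC : C.IsHermitian)
    (hsimple : Function.Injective hA.eigenvalues)
    (U : Matrix (Fin n) (Fin n) ℂ) (hU : U ∈ Matrix.unitaryGroup (Fin n) ℂ)
    (hUdiag : U * A * star U = Matrix.diagonal (fun j => (eigValsDown A j : ℂ)))
    (k : ℕ) :
    HasDerivAt
      (fun t : ℝ => ∑ j ∈ Finset.univ.filter (fun j : Fin n => (j : ℕ) < k),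
        eigValsDown (A + t • C) j)
      (((star U * Matrix.diagonal (fun j : Fin n => if (j : ℕ) < k then (1 : ℂ) else 0) * U)
          * C).trace.re) 0 := by
  have hM : ∀ t : ℝ, (A + t • C).IsHermitian := fun t => hA.add (hC.smul (IsSelfAdjoint.all t))
  choose V hV hVA using fun t : ℝ => (hM t).exists_unitary_conj_eq_diagonal_eigValsDown
  obtain ⟨c, g, hg, hup, hdn⟩ := (hA.strictAnti_eigValsDown hsimple).exists_gap k
  refine hasDerivAt_of_abs_sub_le_sq (K := (C * C).trace.re / (2 * g)) fun t => ?_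
  obtain ⟨c', hup', hdn'⟩ := (hM t).antitone_eigValsDown.exists_threshold k
  have hlow := sum_add_mul_re_trace_le_sum _ (Λ := eigValsDown A) hU hUdiag (hV t) (hVA t)
    hup' hdn'
  have hupp := sum_le_sum_add_mul_re_trace_add _ (Λ := eigValsDown A) hC hU hUdiag (hV t)
    (hVA t) hg hup hdn
  simp only [coordProj, RCLike.re_to_complex] at hlow hupp
  simp only [zero_smul, add_zero, sub_zero, abs_le]
  constructor <;> linarith
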